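/- For every n ≥ 1 and m ≥ 1: if there exists a finite simple graph on m vertices satisfying G ⇒ T_n, then there exists a finite simple graph on m(m+1) vertices satisfying G ⇒ T_{n+1}. (Equivalently, the isometric Ramsey numbers satisfy IR(T_{n+1}) ≤ IR(T_n)·(IR(T_n)+1).) -/

import Mathlib

/-- An orientation of a simple graph `G`: an asymmetric relation `D` whose
symmetrization is exactly the adjacency relation of `G`. -/
def IsOrientation {V : Type*} (G : SimpleGraph V) (D : V → V → Prop) : Prop :=
  (∀ u v, ¬ (D u v ∧ D v u)) ∧ ∀ u v, G.Adj u v ↔ (D u v ∨ D v u)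

/-- A digraph structure on a relation: no loops and no pairs of opposite arcs. -/
def IsDigraph {W : Type*} (E : W → W → Prop) : Prop :=
  ∀ u v, ¬ (E u v ∧ E v u)

/-- `G ⇒ E`: every orientation `D` of `G` contains an isometric copy of the digraph `E`:
an injective map `f` inducing an isomorphism onto its image, preserving orientations,
such that distances (in the underlying undirected graphs) are preserved. -/
def IsoRamseyArrow {V W : Type*} (G : SimpleGraph V) (E : W → W → Prop) : Prop :=
  ∀ D : V → V → Prop, IsOrientation G D →
    ∃ f : W → V, Function.Injective f ∧
      (∀ u v, E u v ↔ D (f u) (f v)) ∧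
      (∀ u v, (SimpleGraph.fromRel E).edist u v = G.edist (f u) (f v))

/-- An oriented tree: a digraph whose underlying undirected graph is a tree. -/
def IsOrientedTree {W : Type*} (E : W → W → Prop) : Prop :=
  IsDigraph E ∧ (SimpleGraph.fromRel E).IsTree

/-- `G ⇒ 𝒯ₙ` : `G ⇒ T` for every oriented tree `T` on `n` vertices. -/
def IsoRamseyArrowTrees {V : Type*} (G : SimpleGraph V) (n : ℕ) : Prop :=
  ∀ (W : Type) (_ : Fintype W), Fintype.card W = n →
    ∀ E : W → W → Prop, IsOrientedTree E → IsoRamseyArrow G E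

/-!
Let `G ⇒ 𝒯ₙ` have `m` vertices and take `G □ K_{m+1}`. Fix an oriented tree `T` on `n + 1`
vertices with a leaf `x` hanging from `y`. In an orientation of `G □ K_{m+1}`, each of the `m`
fibres `{u} × K_{m+1}` is a tournament with at most one sink, so some layer `G × {i}` contains no
sink of any fibre (with fibres reversed if the arc of `T` points from `x` to `y`). Embed `T - x`
isometrically into that layer and send `x` to a fibre neighbour of the image of `y` along an arc
of the right direction. Distances from `x` exceed those from `y` by one, both in the tree and in
the box product, so the extension is again an isometric copy.
-/

open Function

namespace SimpleGraph

variable {V W : Type*} {G : SimpleGraph V}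

lemma Hom.edist_le {G' : SimpleGraph W} (f : G →g G') (u v : V) :
    G'.edist (f u) (f v) ≤ G.edist u v := by
  rcases eq_or_ne (G.edist u v) ⊤ with h | h
  · simp [h]
  obtain ⟨p, hp⟩ := exists_walk_of_edist_ne_top h
  calc G'.edist (f u) (f v) ≤ (p.map f).length := SimpleGraph.edist_le _
    _ = G.edist u v := by rw [Walk.length_map, hp]

/-- A path never passes through a leaf, except at its ends. -/
lemma edist_induce_of_subsingleton_neighborSet {s : Set V}
    (hs : ∀ v ∉ s, (G.neighborSet v).Subsingleton) (a b : s) :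
    (G.induce s).edist a b = G.edist a b := by
  classical
  refine le_antisymm ?_ ((Embedding.induce s).toHom.edist_le a b)
  rcases eq_or_ne (G.edist a b) ⊤ with h | h
  · simp [h]
  obtain ⟨p, hp⟩ := exists_walk_of_edist_ne_top h
  have hsupp : ∀ w ∈ p.bypass.support, w ∈ s := fun w hw => by
    by_contra hws
    exact p.bypass_isPath.isTrail.not_mem_support_of_subsingleton_neighborSet
      (by rintro rfl; exact hws a.2) (by rintro rfl; exact hws b.2) (hs w hws) hw
  calc (G.induce s).edist a b ≤ (p.bypass.induce s hsupp).length := edist_le _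
    _ = p.bypass.length := by
      rw [← Walk.length_map (Embedding.induce s).toHom, Walk.map_induce]; rfl
    _ ≤ p.length := by exact_mod_cast p.length_bypass_le_length
    _ = G.edist a b := hp

lemma edist_eq_edist_add_one_of_forall_adj_eq {x y : V} (hxy : G.Adj x y)
    (hleaf : ∀ z, G.Adj x z → z = y) {v : V} (hv : v ≠ x) :
    G.edist x v = G.edist y v + 1 := by
  refine le_antisymm ?_ ?_
  · calc G.edist x v ≤ G.edist x y + G.edist y v := G.edist_triangle
      _ = G.edist y v + 1 := by rw [edist_eq_one_iff_adj.mpr hxy, add_comm]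
  · rcases eq_or_ne (G.edist x v) ⊤ with h | h
    · simp [h]
    obtain ⟨p, hp⟩ := exists_walk_of_edist_ne_top h
    obtain ⟨z, hxz, q, rfl⟩ := Walk.exists_eq_cons_of_ne hv.symm p
    obtain rfl := hleaf z hxz
    rw [← hp, Walk.length_cons, Nat.cast_succ]
    gcongr
    exact edist_le q

lemma fromRel_induce (E : W → W → Prop) (s : Set W) :
    fromRel (fun a b : s => E a b) = (fromRel E).induce s := by
  ext a b
  simp [Subtype.coe_ne_coe]

end SimpleGraph

open SimpleGraph

variable {V W ι : Type*}

lemma IsOrientedTree.induce_compl_singleton {E : W → W → Prop} (hE : IsOrientedTree E) {x : W}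
    [Fintype ((fromRel E).neighborSet x)] (hx : (fromRel E).degree x = 1) :
    IsOrientedTree (fun a b : ({x}ᶜ : Set W) => E a b) := by
  refine ⟨fun a b => hE.1 a b, ?_⟩
  rw [fromRel_induce]
  exact ⟨hE.2.connected.induce_compl_singleton_of_degree_eq_one hx, hE.2.isAcyclic.induce _⟩

lemma IsOrientation.boxProd_layer {G : SimpleGraph V} {K : SimpleGraph ι}
    {D : V × ι → V × ι → Prop} (hD : IsOrientation (G □ K) D) (i : ι) :
    IsOrientation G (fun a b => D (a, i) (b, i)) :=
  ⟨fun _ _ => hD.1 _ _, fun _ _ => boxProd_adj_left.symm.trans (hD.2 _ _)⟩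

section IsometricCopy

variable {H : SimpleGraph V} {D : V → V → Prop} {E : W → W → Prop}

lemma IsOrientation.iff_of_not_adj (hD : IsOrientation H D) (hE : IsDigraph E) {u v : W}
    {p q : V} (huv : ¬(fromRel E).Adj u v) (hpq : ¬H.Adj p q) : E u v ↔ D p q :=
  iff_of_false (fun h => huv ((fromRel_adj E u v).mpr ⟨fun huv => hE u v ⟨h, huv ▸ h⟩, .inl h⟩))
    (fun h => hpq ((hD.2 p q).mpr (.inl h)))

lemma IsOrientation.iff_swap (hD : IsOrientation H D) (hE : IsDigraph E) {u v : W} {p q : V}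
    (huv : (fromRel E).Adj u v) (hpq : H.Adj p q) (h : E u v ↔ D p q) : E v u ↔ D q p := by
  have := ((fromRel_adj E u v).mp huv).2
  have := (hD.2 p q).mp hpq
  have := hE u v
  have := hD.1 p q
  tauto

def IsIsometricCopy (H : SimpleGraph V) (D : V → V → Prop) (E : W → W → Prop) (f : W → V) :
    Prop :=
  Injective f ∧ (∀ u v, E u v ↔ D (f u) (f v)) ∧
    ∀ u v, (fromRel E).edist u v = H.edist (f u) (f v)

lemma exists_isIsometricCopy_of_compl_singleton {x : W} {g : ({x}ᶜ : Set W) → V}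
    (hg_inj : Injective g) (hg_arc : ∀ a b : ({x}ᶜ : Set W), E a b ↔ D (g a) (g b))
    (hg_dist : ∀ a b : ({x}ᶜ : Set W), (fromRel E).edist a b = H.edist (g a) (g b))
    (hEx : ¬E x x) (hDp : ∀ p, ¬D p p) {p : V} (hp_ne : ∀ a, p ≠ g a)
    (hp_arc : ∀ a : ({x}ᶜ : Set W), (E x a ↔ D p (g a)) ∧ (E a x ↔ D (g a) p))
    (hp_dist : ∀ a : ({x}ᶜ : Set W), (fromRel E).edist x a = H.edist p (g a)) :
    ∃ f, IsIsometricCopy H D E f := by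
  classical
  let f : W → V := fun w => if hw : w = x then p else g ⟨w, hw⟩
  have hfx : f x = p := dif_pos rfl
  have hfa (a : ({x}ᶜ : Set W)) : f a = g a := dif_neg a.2
  have hcases (w : W) : x = w ∨ ∃ a : ({x}ᶜ : Set W), (a : W) = w :=
    (eq_or_ne x w).imp_right fun hw => ⟨⟨w, hw.symm⟩, rfl⟩
  refine ⟨f, fun u v huv => ?_, fun u v => ?_, fun u v => ?_⟩ <;>
    rcases hcases u with rfl | ⟨a, rfl⟩ <;> rcases hcases v with rfl | ⟨b, rfl⟩
  · rfl
  · exact absurd (hfx ▸ hfa b ▸ huv) (hp_ne b)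
  · exact absurd (hfx ▸ hfa a ▸ huv).symm (hp_ne a)
  · exact congrArg Subtype.val (hg_inj (hfa a ▸ hfa b ▸ huv))
  · exact iff_of_false hEx (hDp _)
  · rw [hfx, hfa]; exact (hp_arc b).1
  · rw [hfx, hfa]; exact (hp_arc a).2
  · rw [hfa, hfa]; exact hg_arc a b
  · rw [SimpleGraph.edist_self, SimpleGraph.edist_self]
  · rw [hfx, hfa]; exact hp_dist b
  · rw [hfx, hfa, SimpleGraph.edist_comm, SimpleGraph.edist_comm (G := H)]; exact hp_dist a
  · rw [hfa, hfa]; exact hg_dist a b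

lemma IsIsometricCopy.extend_leaf (hD : IsOrientation H D) (hE : IsDigraph E) {x y : W}
    (hxy : (fromRel E).Adj x y) (hleaf : ∀ z, (fromRel E).Adj x z → z = y)
    {g : ({x}ᶜ : Set W) → V} (hg : IsIsometricCopy H D (fun a b : ({x}ᶜ : Set W) => E a b) g)
    {p : V} (hp_dist : ∀ a, H.edist p (g a) = H.edist (g ⟨y, hxy.ne'⟩) (g a) + 1)
    (hp_arc : E y x ↔ D (g ⟨y, hxy.ne'⟩) p) :
    ∃ f, IsIsometricCopy H D E f := by
  obtain ⟨hg_inj, hg_arc, hg_dist⟩ := hg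
  set y' : ({x}ᶜ : Set W) := ⟨y, hxy.ne'⟩
  have hx_sub : ((fromRel E).neighborSet x).Subsingleton := fun _ hz _ hz' =>
    (hleaf _ hz).trans (hleaf _ hz').symm
  have hdist (a b : ({x}ᶜ : Set W)) : (fromRel E).edist a b = H.edist (g a) (g b) := by
    rw [← edist_induce_of_subsingleton_neighborSet (by simpa using hx_sub), ← fromRel_induce]
    exact hg_dist a b
  have hx_adj (a : ({x}ᶜ : Set W)) : (fromRel E).Adj x a ↔ a = y' :=
    ⟨fun h => Subtype.ext (hleaf a h), fun h => h ▸ hxy⟩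
  have hp_adj (a : ({x}ᶜ : Set W)) : H.Adj p (g a) ↔ a = y' :=
    calc H.Adj p (g a) ↔ H.edist (g y') (g a) = 0 := by rw [← edist_eq_one_iff_adj, hp_dist]; simp
      _ ↔ a = y' := by rw [edist_eq_zero_iff, hg_inj.eq_iff, eq_comm]
  have hp_ne (a : ({x}ᶜ : Set W)) : p ≠ g a := fun h => by simpa [h] using (hp_dist a).symm
  refine exists_isIsometricCopy_of_compl_singleton hg_inj hg_arc hdist (fun h => hE x x ⟨h, h⟩)
    (fun q h => hD.1 q q ⟨h, h⟩) hp_ne (fun a => ?_)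
    (fun a => by rw [edist_eq_edist_add_one_of_forall_adj_eq hxy hleaf a.2, hdist y', hp_dist])
  by_cases ha : a = y'
  · subst ha
    exact ⟨hD.iff_swap hE hxy.symm ((hp_adj y').mpr rfl).symm hp_arc, hp_arc⟩
  · have hxa : ¬(fromRel E).Adj x a := by rwa [hx_adj]
    have hpa : ¬H.Adj p (g a) := by rwa [hp_adj]
    exact ⟨hD.iff_of_not_adj hE hxa hpa,
      hD.iff_of_not_adj hE (fun h => hxa h.symm) (fun h => hpa h.symm)⟩

end IsometricCopy

lemma IsIsometricCopy.boxProd_layer {G : SimpleGraph V} {K : SimpleGraph ι}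
    {D : V × ι → V × ι → Prop} {E : W → W → Prop} {g : W → V} (i : ι)
    (hg : IsIsometricCopy G (fun a b => D (a, i) (b, i)) E g) :
    IsIsometricCopy (G □ K) D E (fun w => (g w, i)) :=
  ⟨fun _ _ h => hg.1 (Prod.ext_iff.mp h).1, hg.2.1,
    fun u v => by rw [edist_boxProd, SimpleGraph.edist_self, add_zero]; exact hg.2.2 u v⟩

/-- Each tournament `r u` has at most one sink, and there are fewer tournaments than vertices. -/
lemma exists_forall_exists_ne_rel_of_card_lt [Fintype V] [Fintype ι]
    (hcard : Fintype.card V < Fintype.card ι) (r : V → ι → ι → Prop)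
    (htot : ∀ u i j, i ≠ j → r u i j ∨ r u j i) : ∃ i, ∀ u, ∃ j ≠ i, r u i j := by
  by_contra! hc
  choose g hg using hc
  obtain ⟨i, i', hne, heq⟩ := Fintype.exists_ne_map_eq_of_card_lt g hcard
  rcases htot (g i) i i' hne with hr | hr
  · exact hg i i' hne.symm hr
  · exact hg i' i hne (heq ▸ hr)

theorem IsoRamseyArrowTrees.boxProd_top [Fintype V] [Fintype ι] {G : SimpleGraph V} {n : ℕ}
    (hG : IsoRamseyArrowTrees G n) (hn : 1 ≤ n) (hcard : Fintype.card V < Fintype.card ι) :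
    IsoRamseyArrowTrees (G □ (⊤ : SimpleGraph ι)) (n + 1) := by
  classical
  intro W _ hW E hE D hD
  have : Nontrivial W := Fintype.one_lt_card_iff_nontrivial.mp (by omega)
  obtain ⟨x, hx⟩ := hE.2.exists_vert_degree_one_of_nontrivial
  obtain ⟨y, hxy, hleaf⟩ := degree_eq_one_iff_existsUnique_adj.mp hx
  -- the fibre orientations, reversed when the leaf arc points from `x` to `y`
  obtain ⟨i, hi⟩ := exists_forall_exists_ne_rel_of_card_lt hcard
    (fun u i j => E y x ↔ D (u, i) (u, j)) fun u i j hij => by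
      have := (hD.2 (u, i) (u, j)).mp (boxProd_adj_right.mpr hij)
      have := hD.1 (u, i) (u, j)
      tauto
  obtain ⟨g, hg⟩ : ∃ g, IsIsometricCopy G (fun a b => D (a, i) (b, i))
      (fun a b : ({x}ᶜ : Set W) => E a b) g :=
    hG _ inferInstance (by simp [Finset.filter_ne', Finset.card_erase_of_mem, hW]) _
      (hE.induce_compl_singleton hx) _ (hD.boxProd_layer i)
  obtain ⟨j, hji, hj⟩ := hi (g ⟨y, hxy.ne'⟩)
  exact (hg.boxProd_layer i).extend_leaf hD hE.1 hxy hleaf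
    (fun a => by simp [edist_boxProd, edist_top_of_ne hji]) hj

theorem stmt4_general (n m : ℕ) (hn : 1 ≤ n)
    (h : ∃ (V : Type) (_ : Fintype V) (G : SimpleGraph V),
      Fintype.card V = m ∧ IsoRamseyArrowTrees G n) :
    ∃ (V : Type) (_ : Fintype V) (G : SimpleGraph V),
      Fintype.card V = m * (m + 1) ∧ IsoRamseyArrowTrees G (n + 1) := by
  obtain ⟨V, _, G, hV, hG⟩ := h
  exact ⟨V × Fin (m + 1), inferInstance, G □ ⊤, by simp [hV],
    hG.boxProd_top hn (by simp [hV])⟩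

theorem stmt4 (n m : ℕ) (hn : 1 ≤ n) (hm : 1 ≤ m)
    (h : ∃ (V : Type) (_ : Fintype V) (G : SimpleGraph V),
      Fintype.card V = m ∧ IsoRamseyArrowTrees G n) :
    ∃ (V : Type) (_ : Fintype V) (G : SimpleGraph V),
      Fintype.card V = m * (m + 1) ∧ IsoRamseyArrowTrees G (n + 1) :=
  stmt4_general n m hn h
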